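/- Suppose f: M → M is a map of a metric space and there is a sequence of natural numbers q_n → ∞ such that the iterates f^{q_n} converge uniformly to the identity. If additionally the derivative cocycle satisfies ‖D_x f^{q_n}‖ → 1 and ‖D_x f^{-q_n}‖ → 1 uniformly in x (say M compact, f a C^1 diffeomorphism with f^{q_n} → Id in C^1), then all Lyapunov exponents of f at every point x are zero, i.e., limsup_{n→∞} (1/n) log ‖D_x f^n v‖ = 0 for every nonzero tangent vector v. -/

import Mathlib

open Filter

variable {M : Type*} {d : ℕ}

/-- The derivative cocycle over `f`: `coc f A n x = A(f^{n-1} x) ⋯ A(x)`. -/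
noncomputable def coc (f : M → M)
    (A : M → (EuclideanSpace ℝ (Fin d) →L[ℝ] EuclideanSpace ℝ (Fin d))) :
    ℕ → M → (EuclideanSpace ℝ (Fin d) →L[ℝ] EuclideanSpace ℝ (Fin d))
  | 0, _ => 1
  | n + 1, x => A (f^[n] x) ∘L coc f A n x

/-! Cutting time `m` into blocks of length `Q = q n`, on each of which the cocycle is
`δ`-close to the identity, gives `‖coc f A m x‖ ≤ C ^ Q * (1 + δ) ^ (m / Q)`: the growth is
subexponential, so the limsup is at most `0`. Along the times `q n` the cocycle applied to `v`
tends to `v`, so `(1 / q n) * log ‖coc f A (q n) x v‖ → 0` and the limsup is at least `0`. -/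

open Topology

theorem limsup_eq_zero_of_eventually_le_of_tendsto_comp {u : ℕ → ℝ} {q : ℕ → ℕ}
    (hq : Tendsto q atTop atTop) (hle : ∀ ε > 0, ∀ᶠ m in atTop, u m ≤ ε)
    (hsub : Tendsto (fun n => u (q n)) atTop (𝓝 0)) : limsup u atTop = 0 := by
  have hfreq : ∀ ε > 0, ∃ᶠ m in atTop, -ε ≤ u m := fun ε hε =>
    hq.frequently ((hsub.eventually (eventually_ge_nhds (neg_lt_zero.2 hε))).frequently)
  have hbdd : IsBoundedUnder (· ≤ ·) atTop u := isBoundedUnder_of_eventually_le (hle 1 one_pos)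
  have hcobdd : IsCoboundedUnder (· ≤ ·) atTop u :=
    IsCoboundedUnder.of_frequently_ge (hfreq 1 one_pos)
  refine le_antisymm (le_of_forall_pos_le_add fun ε hε => ?_)
    (le_of_forall_pos_le_add fun ε hε => ?_)
  · simpa using limsup_le_of_le hcobdd (hle ε hε)
  · linarith [le_limsup_of_frequently_le (hfreq ε hε) hbdd]

theorem eventually_inv_mul_log_norm_le_of_norm_le_mul_exp {E : Type*} [SeminormedAddGroup E]
    {a : ℕ → E} (ha : ∀ δ > 0, ∃ c, ∀ m : ℕ, ‖a m‖ ≤ c * Real.exp (δ * m)) :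
    ∀ ε > 0, ∀ᶠ m : ℕ in atTop, 1 / (m : ℝ) * Real.log ‖a m‖ ≤ ε := by
  intro ε hε
  obtain ⟨c, hac⟩ := ha (ε / 2) (half_pos hε)
  have hdecay : Tendsto (fun m : ℕ => Real.log c / m) atTop (𝓝 0) :=
    tendsto_const_div_atTop_nhds_zero_nat _
  filter_upwards [hdecay.eventually (eventually_le_nhds (half_pos hε)),
    eventually_gt_atTop 0] with m hlogc hm
  rcases (norm_nonneg (a m)).eq_or_lt with ham | ham
  · simpa [← ham] using hε.le -- `Real.log 0 = 0`
  have hc : 0 < c := pos_of_mul_pos_left (ham.trans_le (hac m)) (Real.exp_pos _).le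
  have hlog : Real.log ‖a m‖ ≤ Real.log c + ε / 2 * m := by
    rw [← Real.log_exp (ε / 2 * m), ← Real.log_mul hc.ne' (Real.exp_pos _).ne']
    exact Real.log_le_log ham (hac m)
  calc 1 / (m : ℝ) * Real.log ‖a m‖ ≤ 1 / m * (Real.log c + ε / 2 * m) := by gcongr
    _ = Real.log c / m + ε / 2 := by field_simp
    _ ≤ ε := by linarith

section Cocycle

variable {f : M → M} {A : M → (EuclideanSpace ℝ (Fin d) →L[ℝ] EuclideanSpace ℝ (Fin d))}

theorem coc_add (m n : ℕ) (x : M) :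
    coc f A (m + n) x = coc f A m (f^[n] x) ∘L coc f A n x := by
  induction m with
  | zero => rw [Nat.zero_add]; exact (ContinuousLinearMap.id_comp _).symm
  | succ m ih =>
    rw [Nat.add_right_comm, coc, ih, Function.iterate_add_apply]
    rfl

theorem coc_mul (Q k : ℕ) (x : M) : coc f A (Q * k) x = coc f^[Q] (coc f A Q) k x := by
  induction k with
  | zero => rfl
  | succ k ih => rw [Nat.mul_succ, add_comm, coc_add, ih, Function.iterate_mul]; rfl

theorem norm_coc_le_pow {C : ℝ} (hA : ∀ x, ‖A x‖ ≤ C) (n : ℕ) (x : M) :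
    ‖coc f A n x‖ ≤ C ^ n := by
  induction n with
  | zero => exact ContinuousLinearMap.norm_id_le
  | succ n ih =>
    calc ‖coc f A (n + 1) x‖ ≤ ‖A (f^[n] x)‖ * ‖coc f A n x‖ :=
          ContinuousLinearMap.opNorm_comp_le _ _
      _ ≤ C * C ^ n := mul_le_mul (hA _) ih (norm_nonneg _) ((norm_nonneg _).trans (hA x))
      _ = C ^ (n + 1) := (pow_succ' C n).symm

theorem norm_coc_le_pow_mod_mul_pow_div {C K : ℝ} {Q : ℕ} (hA : ∀ x, ‖A x‖ ≤ C)
    (hQ : ∀ x, ‖coc f A Q x‖ ≤ K) (m : ℕ) (x : M) :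
    ‖coc f A m x‖ ≤ C ^ (m % Q) * K ^ (m / Q) := by
  have hrem := norm_coc_le_pow (f := f) hA (m % Q) (f^[Q * (m / Q)] x)
  have hblocks : ‖coc f A (Q * (m / Q)) x‖ ≤ K ^ (m / Q) := by
    rw [coc_mul]; exact norm_coc_le_pow hQ _ _
  calc ‖coc f A m x‖
        = ‖coc f A (m % Q) (f^[Q * (m / Q)] x) ∘L coc f A (Q * (m / Q)) x‖ := by
        rw [← coc_add, Nat.mod_add_div]
    _ ≤ ‖coc f A (m % Q) (f^[Q * (m / Q)] x)‖ * ‖coc f A (Q * (m / Q)) x‖ :=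
        ContinuousLinearMap.opNorm_comp_le _ _
    _ ≤ C ^ (m % Q) * K ^ (m / Q) :=
        mul_le_mul hrem hblocks (norm_nonneg _) ((norm_nonneg _).trans hrem)

theorem exists_norm_coc_le_mul_exp {C : ℝ} (hA : ∀ x, ‖A x‖ ≤ C) {q : ℕ → ℕ}
    (hq : Tendsto q atTop atTop)
    (hunif : ∀ ε > 0, ∃ N, ∀ n ≥ N, ∀ x, ‖coc f A (q n) x - 1‖ < ε) :
    ∀ δ > 0, ∃ c, ∀ (m : ℕ) (x : M), ‖coc f A m x‖ ≤ c * Real.exp (δ * m) := by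
  intro δ hδ
  obtain ⟨N, hN⟩ := hunif δ hδ
  obtain ⟨n, hnN, hQ⟩ := ((eventually_ge_atTop N).and (hq.eventually_ge_atTop 1)).exists
  set Q := q n
  have hblock : ∀ y, ‖coc f A Q y‖ ≤ Real.exp (δ * Q) := fun y =>
    calc ‖coc f A Q y‖ = ‖(coc f A Q y - 1) + 1‖ := by rw [sub_add_cancel]
      _ ≤ δ + 1 := (norm_add_le _ _).trans (add_le_add (hN n hnN y).le
          ContinuousLinearMap.norm_id_le)
      _ ≤ Real.exp δ := by linarith [Real.add_one_le_exp δ]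
      _ ≤ Real.exp (δ * Q) :=
        Real.exp_le_exp.2 (le_mul_of_one_le_right hδ.le (by exact_mod_cast hQ))
  refine ⟨max C 1 ^ Q, fun m x => ?_⟩
  have hdiv : ((m / Q : ℕ) : ℝ) * Q ≤ m := by exact_mod_cast Nat.div_mul_le_self m Q
  calc ‖coc f A m x‖ ≤ max C 1 ^ (m % Q) * Real.exp (δ * Q) ^ (m / Q) :=
        norm_coc_le_pow_mod_mul_pow_div (fun y => (hA y).trans (le_max_left _ _)) hblock m x
    _ ≤ max C 1 ^ Q * Real.exp (δ * m) := by
        gcongr ?_ * ?_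
        · exact pow_le_pow_right₀ (le_max_right _ _) (Nat.mod_lt m hQ).le
        · rw [← Real.exp_nat_mul]
          exact Real.exp_le_exp.2 (by nlinarith)

theorem tendsto_coc_comp_one {q : ℕ → ℕ}
    (hunif : ∀ ε > 0, ∃ N, ∀ n ≥ N, ∀ x, ‖coc f A (q n) x - 1‖ < ε) (x : M) :
    Tendsto (fun n => coc f A (q n) x) atTop (𝓝 1) :=
  Metric.tendsto_atTop.2 fun ε hε =>
    let ⟨N, hN⟩ := hunif ε hε
    ⟨N, fun n hn => by simpa only [dist_eq_norm] using hN n hn x⟩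

end Cocycle

theorem lyapunov_zero_of_rigidity_general
    (f : M → M)
    (A B : M → (EuclideanSpace ℝ (Fin d) →L[ℝ] EuclideanSpace ℝ (Fin d)))
    (C : ℝ) (hC : ∀ x, ‖A x‖ ≤ C ∧ ‖B x‖ ≤ C)
    (q : ℕ → ℕ) (hq : Tendsto q atTop atTop)
    (hunif : ∀ ε > 0, ∃ N, ∀ n ≥ N, ∀ x, ‖coc f A (q n) x - 1‖ < ε) :
    ∀ (x : M) (v : EuclideanSpace ℝ (Fin d)), v ≠ 0 →
      Filter.limsup (fun n : ℕ => (1 / (n : ℝ)) * Real.log ‖coc f A n x v‖)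
        atTop = 0 := by
  intro x v hv
  refine limsup_eq_zero_of_eventually_le_of_tendsto_comp hq
    (eventually_inv_mul_log_norm_le_of_norm_le_mul_exp fun δ hδ => ?_) ?_
  · obtain ⟨c, hc⟩ := exists_norm_coc_le_mul_exp (fun y => (hC y).1) hq hunif δ hδ
    refine ⟨c * ‖v‖, fun m => ((coc f A m x).le_opNorm v).trans ?_⟩
    calc ‖coc f A m x‖ * ‖v‖ ≤ c * Real.exp (δ * m) * ‖v‖ := by gcongr; exact hc m x
      _ = c * ‖v‖ * Real.exp (δ * m) := mul_right_comm _ _ _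
  · have hlog :
        Tendsto (fun n => Real.log ‖coc f A (q n) x v‖) atTop (𝓝 (Real.log ‖v‖)) := by
      simpa using (((continuous_eval_const v).tendsto 1).comp
        (tendsto_coc_comp_one hunif x)).norm.log (norm_ne_zero_iff.2 hv)
    simpa using ((tendsto_one_div_atTop_nhds_zero_nat.comp hq).mul hlog)

/-- If `f^{q_n} → Id` uniformly in `C¹` (modeled by the cocycle over the
`q_n`-th iterates converging uniformly to the identity) and the generator and
its inverse are uniformly bounded, then all Lyapunov exponents vanish. -/
theorem lyapunov_zero_of_rigidity
    (f : M → M)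
    (A B : M → (EuclideanSpace ℝ (Fin d) →L[ℝ] EuclideanSpace ℝ (Fin d)))
    (hinv : ∀ x, A x ∘L B x = 1 ∧ B x ∘L A x = 1)
    (C : ℝ) (hC : ∀ x, ‖A x‖ ≤ C ∧ ‖B x‖ ≤ C)
    (q : ℕ → ℕ) (hq : Tendsto q atTop atTop)
    (hunif : ∀ ε > 0, ∃ N, ∀ n ≥ N, ∀ x, ‖coc f A (q n) x - 1‖ < ε) :
    ∀ (x : M) (v : EuclideanSpace ℝ (Fin d)), v ≠ 0 →
      Filter.limsup (fun n : ℕ => (1 / (n : ℝ)) * Real.log ‖coc f A n x v‖)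
        atTop = 0 :=
  lyapunov_zero_of_rigidity_general f A B C hC q hq hunif
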